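/- arXiv:2206.12500 — 6 statements merged into one kernel-verified Lean document; each statement's English description precedes it below -/
import Mathlib

section
/- Given λ > 0 and a finite set P of points moving linearly in the plane, define G_λ(t) as the graph on vertex set P with an edge between p and q iff ‖p(t) - q(t)‖ ≤ λ. Then the minimum bottleneck of a moving spanning tree satisfies b(T*) ≤ λ if and only if the intersection graph G_λ(0) ∩ G_λ(1) (edges present in both graphs) is connected. -/
/-- The bottleneck of a moving spanning tree. -/
noncomputable def bottleneck {V : Type*} (p0 p1 : V → EuclideanSpace ℝ (Fin 2))
    (T : SimpleGraph V) : ℝ :=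
  sSup {d : ℝ | ∃ u v, T.Adj u v ∧ ∃ t ∈ Set.Icc (0:ℝ) 1,
    d = ‖((1 - t) • p0 u + t • p1 u) - ((1 - t) • p0 v + t • p1 v)‖}

/-- The intersection graph `G_λ(0) ∩ G_λ(1)`: two distinct points are adjacent iff
their distance is at most `λ` both at time `0` and at time `1`. -/
def interGraph {V : Type*} (p0 p1 : V → EuclideanSpace ℝ (Fin 2)) (lam : ℝ) :
    SimpleGraph V :=
  SimpleGraph.fromRel (fun u v => ‖p0 u - p0 v‖ ≤ lam ∧ ‖p1 u - p1 v‖ ≤ lam)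

/-!
Since `‖p(t) - q(t)‖` is a convex function of `t`, its maximum over `[0, 1]` is attained at an
endpoint, so `b(T) ≤ λ` says exactly that `T` is a subgraph of `G_λ(0) ∩ G_λ(1)`. A connected
`G_λ(0) ∩ G_λ(1)` contains a spanning tree, whose bottleneck bounds `b(T*)`; conversely the
edges of `T*` connect `G_λ(0) ∩ G_λ(1)`.
-/

lemma norm_interp_sub_interp_le_max {E : Type*} [SeminormedAddCommGroup E] [NormedSpace ℝ E]
    (x₀ x₁ y₀ y₁ : E) {t : ℝ} (ht : t ∈ Set.Icc (0 : ℝ) 1) :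
    ‖((1 - t) • x₀ + t • x₁) - ((1 - t) • y₀ + t • y₁)‖ ≤ max ‖x₀ - y₀‖ ‖x₁ - y₁‖ := by
  have hcombo : ((1 - t) • x₀ + t • x₁) - ((1 - t) • y₀ + t • y₁)
      = (1 - t) • (x₀ - y₀) + t • (x₁ - y₁) := by
    simp only [smul_sub]; abel
  rw [hcombo, ← mem_closedBall_zero_iff]
  exact convex_closedBall (0 : E) _
    (mem_closedBall_zero_iff.2 (le_max_left _ _)) (mem_closedBall_zero_iff.2 (le_max_right _ _))
    (by linarith [ht.2]) ht.1 (by ring)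

lemma interGraph_adj {V : Type*} (p0 p1 : V → EuclideanSpace ℝ (Fin 2)) (lam : ℝ) (u v : V) :
    (interGraph p0 p1 lam).Adj u v ↔ u ≠ v ∧ ‖p0 u - p0 v‖ ≤ lam ∧ ‖p1 u - p1 v‖ ≤ lam := by
  simp only [interGraph, SimpleGraph.fromRel_adj, norm_sub_rev (p0 v), norm_sub_rev (p1 v),
    or_self]

lemma bottleneck_le_iff_le_interGraph {V : Type*} [Finite V]
    (p0 p1 : V → EuclideanSpace ℝ (Fin 2)) (T : SimpleGraph V) {lam : ℝ} (hlam : 0 ≤ lam) :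
    bottleneck p0 p1 T ≤ lam ↔ T ≤ interGraph p0 p1 lam := by
  obtain ⟨M, hM⟩ := (Set.finite_range
    fun uv : V × V => max ‖p0 uv.1 - p0 uv.2‖ ‖p1 uv.1 - p1 uv.2‖).bddAbove
  have hbdd : BddAbove {d : ℝ | ∃ u v, T.Adj u v ∧ ∃ t ∈ Set.Icc (0 : ℝ) 1,
      d = ‖((1 - t) • p0 u + t • p1 u) - ((1 - t) • p0 v + t • p1 v)‖} := by
    refine ⟨M, ?_⟩
    rintro _ ⟨u, v, -, t, ht, rfl⟩
    exact (norm_interp_sub_interp_le_max _ _ _ _ ht).trans (hM ⟨(u, v), rfl⟩)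
  constructor
  · intro h u v huv
    have hle : ∀ t ∈ Set.Icc (0 : ℝ) 1,
        ‖((1 - t) • p0 u + t • p1 u) - ((1 - t) • p0 v + t • p1 v)‖ ≤ lam :=
      fun t ht => (le_csSup hbdd ⟨u, v, huv, t, ht, rfl⟩).trans h
    refine (interGraph_adj p0 p1 lam u v).2 ⟨huv.ne, ?_, ?_⟩
    · simpa using hle 0 (by norm_num)
    · simpa using hle 1 (by norm_num)
  · intro h
    refine Real.sSup_le ?_ hlam
    rintro _ ⟨u, v, huv, t, ht, rfl⟩
    obtain ⟨-, h0, h1⟩ := (interGraph_adj p0 p1 lam u v).1 (h huv)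
    exact (norm_interp_sub_interp_le_max _ _ _ _ ht).trans (max_le h0 h1)

theorem stmt5_general {V : Type*} [Fintype V]
    (p0 p1 : V → EuclideanSpace ℝ (Fin 2)) (lam : ℝ) (hlam : 0 < lam)
    (Tstar : SimpleGraph V) (hTree : Tstar.IsTree)
    (hmin : ∀ T : SimpleGraph V, T.IsTree → bottleneck p0 p1 Tstar ≤ bottleneck p0 p1 T) :
    bottleneck p0 p1 Tstar ≤ lam ↔ (interGraph p0 p1 lam).Connected := by
  constructor
  · intro h
    exact hTree.connected.mono ((bottleneck_le_iff_le_interGraph p0 p1 Tstar hlam.le).1 h)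
  · intro h
    obtain ⟨T, hTle, hT⟩ := h.exists_isTree_le
    exact (hmin T hT).trans ((bottleneck_le_iff_le_interGraph p0 p1 T hlam.le).2 hTle)

theorem stmt5 {V : Type*} [Fintype V] [Nonempty V]
    (p0 p1 : V → EuclideanSpace ℝ (Fin 2)) (lam : ℝ) (hlam : 0 < lam)
    (Tstar : SimpleGraph V) (hTree : Tstar.IsTree)
    (hmin : ∀ T : SimpleGraph V, T.IsTree → bottleneck p0 p1 Tstar ≤ bottleneck p0 p1 T) :
    bottleneck p0 p1 Tstar ≤ lam ↔ (interGraph p0 p1 lam).Connected :=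
  stmt5_general p0 p1 lam hlam Tstar hTree hmin
end

section
/- Let C be an axis-parallel square of side length λ/√2 and let q be a point whose disk A_q of radius λ centered at q intersects the boundary of C in at least one point and does not contain all of C. If moreover q lies strictly above the horizontal line containing the top edge of C (and C is extended downward to be bottom-unbounded), then the intersection of the circle ∂A_q with C consists of a single connected arc. -/
/-!
Below the horizontal line through `q`, the circle of radius `λ` is the graph of
`t ↦ q₁ - √(λ² - t²)` over `t = x₀ - q₀`, and on this graph the condition `x₁ ≤ b` says
`t² ≤ λ² - (q₁ - b)²`. So the circle meets `C` in the continuous image of an interval.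
It is nonempty by the intermediate value theorem for `dist · q` on the convex set `C`, between a
point of `frontier C` in the disk and a point of `C` outside it.
-/

open Metric

local notation "ℝ²" => EuclideanSpace ℝ (Fin 2)

lemma dist_sq_eq_fin_two (x y : ℝ²) : dist x y ^ 2 = (x 0 - y 0) ^ 2 + (x 1 - y 1) ^ 2 := by
  simp [EuclideanSpace.dist_sq_eq, Fin.sum_univ_two, Real.dist_eq, sq_abs]

def lowerColumn (I : Set ℝ) (b : ℝ) : Set ℝ² := {x | x 0 ∈ I ∧ x 1 ≤ b}

lemma convex_lowerColumn {I : Set ℝ} (hI : Convex ℝ I) (b : ℝ) : Convex ℝ (lowerColumn I b) :=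
  (hI.linear_preimage (EuclideanSpace.proj 0 : ℝ² →L[ℝ] ℝ).toLinearMap).inter
    (convex_halfSpace_le (EuclideanSpace.proj 1 : ℝ² →L[ℝ] ℝ).toLinearMap.isLinear b)

lemma isClosed_lowerColumn {I : Set ℝ} (hI : IsClosed I) (b : ℝ) : IsClosed (lowerColumn I b) :=
  (hI.preimage (EuclideanSpace.proj 0).continuous).inter
    (isClosed_le (EuclideanSpace.proj 1).continuous continuous_const)

noncomputable def lowerArc (q : ℝ²) (r t : ℝ) : ℝ² := !₂[q 0 + t, q 1 - √(r ^ 2 - t ^ 2)]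

@[simp] lemma lowerArc_zero (q : ℝ²) (r t : ℝ) : lowerArc q r t 0 = q 0 + t := rfl
@[simp] lemma lowerArc_one (q : ℝ²) (r t : ℝ) : lowerArc q r t 1 = q 1 - √(r ^ 2 - t ^ 2) := rfl

lemma continuous_lowerArc (q : ℝ²) (r : ℝ) : Continuous (lowerArc q r) := by
  unfold lowerArc; fun_prop

lemma lowerArc_mem_sphere {q : ℝ²} {r t : ℝ} (hr : 0 ≤ r) (ht : t ^ 2 ≤ r ^ 2) :
    lowerArc q r t ∈ sphere q r := by
  rw [mem_sphere, ← sq_eq_sq₀ dist_nonneg hr, dist_sq_eq_fin_two, lowerArc_zero, lowerArc_one,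
    add_sub_cancel_left, sub_sub_cancel_left, neg_sq, Real.sq_sqrt (sub_nonneg.2 ht)]
  ring

lemma lowerArc_eq_of_mem_sphere {q x : ℝ²} {r : ℝ} (hx : x ∈ sphere q r) (hx1 : x 1 ≤ q 1) :
    lowerArc q r (x 0 - q 0) = x := by
  have hsq := dist_sq_eq_fin_two x q
  rw [mem_sphere.1 hx] at hsq
  have : √(r ^ 2 - (x 0 - q 0) ^ 2) = q 1 - x 1 := by
    rw [hsq, add_sub_cancel_left, ← neg_sub, neg_sq, Real.sqrt_sq (sub_nonneg.2 hx1)]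
  ext i
  fin_cases i
  · simp
  · simp [this]

lemma lowerArc_one_le_iff {q : ℝ²} {r b t : ℝ} (hb : b < q 1) :
    lowerArc q r t 1 ≤ b ↔ t ^ 2 ≤ r ^ 2 - (q 1 - b) ^ 2 := by
  rw [lowerArc_one, sub_le_comm, Real.le_sqrt' (sub_pos.2 hb)]
  constructor <;> intro h <;> linarith

lemma sphere_inter_lowerColumn_eq_image {q : ℝ²} {r b : ℝ} (hr : 0 ≤ r) (hb : b < q 1)
    (I : Set ℝ) :
    sphere q r ∩ lowerColumn I b =
      lowerArc q r '' ((fun t ↦ q 0 + t) ⁻¹' I ∩ {t | t ^ 2 ≤ r ^ 2 - (q 1 - b) ^ 2}) := by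
  ext x
  constructor
  · rintro ⟨hx, hxI, hxb⟩
    have hx_eq := lowerArc_eq_of_mem_sphere hx (hxb.trans hb.le)
    exact ⟨x 0 - q 0, ⟨by simpa using hxI, (lowerArc_one_le_iff hb).1 (by rwa [hx_eq])⟩, hx_eq⟩
  · rintro ⟨t, ⟨htI, ht⟩, rfl⟩
    exact ⟨lowerArc_mem_sphere hr (le_trans ht (sub_le_self _ (sq_nonneg _))), htI,
      (lowerArc_one_le_iff hb).2 ht⟩

theorem isPreconnected_sphere_inter_lowerColumn (q : ℝ²) (r : ℝ) {I : Set ℝ} (hI : Convex ℝ I)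
    {b : ℝ} (hb : b < q 1) : IsPreconnected (sphere q r ∩ lowerColumn I b) := by
  rcases lt_or_ge r 0 with hr | hr
  · simp [sphere_eq_empty_of_neg hr, isPreconnected_empty]
  rw [sphere_inter_lowerColumn_eq_image hr hb]
  have hparam : Convex ℝ ((fun t ↦ q 0 + t) ⁻¹' I ∩ {t | t ^ 2 ≤ r ^ 2 - (q 1 - b) ^ 2}) := by
    refine (hI.translate_preimage_right _).inter ?_
    simpa using (even_two.convexOn_pow (𝕜 := ℝ)).convex_le (r ^ 2 - (q 1 - b) ^ 2)
  exact hparam.isPreconnected.image _ (continuous_lowerArc q r).continuousOn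

theorem stmt8_general (lam a b : ℝ)
    (q : EuclideanSpace ℝ (Fin 2)) (hq : b < q 1)
    (C : Set (EuclideanSpace ℝ (Fin 2)))
    (hC : C = {x | x 0 ∈ Set.Icc a (a + lam / Real.sqrt 2) ∧ x 1 ≤ b})
    (hinter : (Metric.closedBall q lam ∩ frontier C).Nonempty)
    (hnotall : ¬ C ⊆ Metric.closedBall q lam) :
    IsConnected (Metric.sphere q lam ∩ C) := by
  change C = lowerColumn _ b at hC
  subst hC
  obtain ⟨p, hp_ball, hp_frontier⟩ := hinter
  obtain ⟨y, hyC, hy_out⟩ := Set.not_subset.1 hnotall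
  have hpC := (isClosed_lowerColumn isClosed_Icc b).frontier_subset hp_frontier
  obtain ⟨x, hxC, hx⟩ := (convex_lowerColumn (convex_Icc _ _) b).isPreconnected.intermediate_value
    hpC hyC (continuous_id.dist continuous_const).continuousOn
    ⟨mem_closedBall.1 hp_ball, (not_le.1 hy_out).le⟩
  exact ⟨⟨x, hx, hxC⟩, isPreconnected_sphere_inter_lowerColumn q lam (convex_Icc _ _) hq⟩

theorem stmt8 (lam a b : ℝ) (hlam : 0 < lam)
    (q : EuclideanSpace ℝ (Fin 2)) (hq : b < q 1)
    (C : Set (EuclideanSpace ℝ (Fin 2)))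
    (hC : C = {x | x 0 ∈ Set.Icc a (a + lam / Real.sqrt 2) ∧ x 1 ≤ b})
    (hinter : (Metric.closedBall q lam ∩ frontier C).Nonempty)
    (hnotall : ¬ C ⊆ Metric.closedBall q lam) :
    IsConnected (Metric.sphere q lam ∩ C) :=
  stmt8_general lam a b q hq C hC hinter hnotall
end

section
/- Let q₁, q₂ be two distinct points in the plane, both strictly above the horizontal line y = b, and consider the lower half-circles γᵢ = { (x,y) : ‖(x,y)-qᵢ‖ = λ, y ≤ (qᵢ)_y } of the circles of equal radius λ centered at them. Then γ₁ and γ₂ intersect in at most one point below the line y = b; equivalently, restricted to { y ≤ b }, the two lower half-circles cross at most once. -/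
/-!
A point lying on both circles is equidistant from `q₁` and `q₂`. Two distinct such points `p, p'`
form a rhombus with `q₁, q₂`, and in the plane the diagonals of a rhombus bisect each other:
both midpoints lie on the two perpendicular bisectors, which are lines with orthogonal directions.
Hence `p_y + p'_y = (q₁)_y + (q₂)_y`, impossible when `p_y, p'_y ≤ b < (q₁)_y, (q₂)_y`.
-/

open Module AffineSubspace EuclideanGeometry
open scoped RealInnerProductSpace

theorem AffineSubspace.midpoint_mem {k V P : Type*} [Ring k] [Invertible (2 : k)]
    [AddCommGroup V] [Module k V] [AddTorsor V P] (s : AffineSubspace k P) {p₁ p₂ : P}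
    (h₁ : p₁ ∈ s) (h₂ : p₂ ∈ s) : midpoint k p₁ p₂ ∈ s :=
  AffineMap.lineMap_mem _ h₁ h₂

namespace EuclideanGeometry

variable {V P : Type*} [NormedAddCommGroup V] [InnerProductSpace ℝ V] [MetricSpace P]
  [NormedAddTorsor V P]

theorem midpoint_eq_midpoint_of_dist_eq_of_finrank_eq_two (hd : finrank ℝ V = 2)
    {c₁ c₂ p₁ p₂ : P} (hc : c₁ ≠ c₂) (hp : p₁ ≠ p₂) (hp₁ : dist p₁ c₁ = dist p₁ c₂)
    (hp₂ : dist p₂ c₁ = dist p₂ c₂) (hc₁ : dist p₁ c₁ = dist p₂ c₁) :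
    midpoint ℝ p₁ p₂ = midpoint ℝ c₁ c₂ := by
  have : Fact (finrank ℝ V = 2) := ⟨hd⟩
  have hc₂ : dist p₁ c₂ = dist p₂ c₂ := by rw [← hp₁, ← hp₂, hc₁]
  set m := midpoint ℝ p₁ p₂ -ᵥ midpoint ℝ c₁ c₂
  have hmc : ⟪c₂ -ᵥ c₁, m⟫ = 0 := by
    rw [← Submodule.mem_orthogonal_singleton_iff_inner_right, ← direction_perpBisector]
    exact vsub_mem_direction
      ((perpBisector c₁ c₂).midpoint_mem (mem_perpBisector_iff_dist_eq.mpr hp₁)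
        (mem_perpBisector_iff_dist_eq.mpr hp₂))
      (midpoint_mem_perpBisector c₁ c₂)
  have hm_perp : m ∈ (ℝ ∙ (p₂ -ᵥ p₁))ᗮ := by
    rw [← direction_perpBisector]
    exact vsub_mem_direction (midpoint_mem_perpBisector p₁ p₂)
      ((perpBisector p₁ p₂).midpoint_mem (mem_perpBisector_iff_dist_eq'.mpr hc₁)
        (mem_perpBisector_iff_dist_eq'.mpr hc₂))
  have hm_span : m ∈ ℝ ∙ (p₂ -ᵥ p₁) :=
    Submodule.mem_span_singleton_of_inner_eq_zero_of_inner_eq_zero (vsub_ne_zero.mpr hc.symm)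
      (vsub_ne_zero.mpr hp.symm) hmc (inner_vsub_vsub_of_dist_eq_of_dist_eq hc₁ hc₂)
  have hm : m = 0 := by
    simpa using (Submodule.inf_orthogonal_eq_bot _).le ⟨hm_span, hm_perp⟩
  exact vsub_eq_zero_iff_eq.mp hm

end EuclideanGeometry

theorem stmt10_general (lam b : ℝ)
    (q₁ q₂ : EuclideanSpace ℝ (Fin 2)) (hne : q₁ ≠ q₂)
    (h1 : b < q₁ 1) (h2 : b < q₂ 1) :
    Set.Subsingleton {p : EuclideanSpace ℝ (Fin 2) |
      dist p q₁ = lam ∧ dist p q₂ = lam ∧ p 1 ≤ q₁ 1 ∧ p 1 ≤ q₂ 1 ∧ p 1 ≤ b} := by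
  rintro p ⟨hpq₁, hpq₂, -, -, hp⟩ p' ⟨hp'q₁, hp'q₂, -, -, hp'⟩
  by_contra hpp'
  have hmid := congrArg (· 1) <| midpoint_eq_midpoint_of_dist_eq_of_finrank_eq_two
    finrank_euclideanSpace_fin hne hpp' (hpq₁.trans hpq₂.symm) (hp'q₁.trans hp'q₂.symm)
    (hpq₁.trans hp'q₁.symm)
  simp only [midpoint_eq_smul_add, invOf_eq_inv, smul_add, PiLp.add_apply, PiLp.smul_apply,
    smul_eq_mul] at hmid
  linarith

theorem stmt10 (lam b : ℝ) (hlam : 0 < lam)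
    (q₁ q₂ : EuclideanSpace ℝ (Fin 2)) (hne : q₁ ≠ q₂)
    (h1 : b < q₁ 1) (h2 : b < q₂ 1) :
    Set.Subsingleton {p : EuclideanSpace ℝ (Fin 2) |
      dist p q₁ = lam ∧ dist p q₂ = lam ∧ p 1 ≤ q₁ 1 ∧ p 1 ≤ q₂ 1 ∧ p 1 ≤ b} :=
  stmt10_general lam b q₁ q₂ hne h1 h2
end

section
/- Let Q be a finite set of points all strictly above the line y = b, and define for each q ∈ Q the function f_q(x) = q_y - √(λ² - (x - q_x)²) on the domain [q_x - λ, q_x + λ] (the lower half-circle of the radius-λ circle around q). Let U(x) = min over q ∈ Q with x ∈ dom(f_q) of f_q(x) (the lower envelope). Then for a query point p = (p_x, p_y) with p_y ≤ b: there exists q ∈ Q with ‖p - q‖ ≤ λ if and only if some f_q is defined at p_x and p_y ≥ U(p_x). -/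
/-!
For `q` above the query point (`p 1 ≤ b < q 1`), the vertical gap `q 1 - p 1` is nonnegative, so
`‖p - q‖ ≤ λ` says exactly that `|p 0 - q 0| ≤ λ` and that the gap is at most
`√(λ² - (p 0 - q 0)²)`, i.e. that `p` lies on or above the lower half-circle `f_q` at `p 0`.
Since `Q` is finite, the envelope value `U (p 0)` is attained by some `q`, so `U (p 0) ≤ p 1` holds
iff `f_q (p 0) ≤ p 1` for some `q` whose domain contains `p 0`.
-/

open Real

lemma exists_and_csInf_le_iff {ι α : Type*} [ConditionallyCompleteLinearOrder α]
    (s : Finset ι) (P : ι → Prop) (f : ι → α) (a : α) :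
    ((∃ i ∈ s, P i) ∧ sInf {y | ∃ i ∈ s, P i ∧ y = f i} ≤ a) ↔ ∃ i ∈ s, P i ∧ f i ≤ a := by
  have hfin : {y | ∃ i ∈ s, P i ∧ y = f i}.Finite :=
    (s.finite_toSet.image f).subset (by rintro _ ⟨i, hi, -, rfl⟩; exact ⟨i, hi, rfl⟩)
  constructor
  · rintro ⟨⟨i, hi, hPi⟩, h⟩
    have hne : {y | ∃ i ∈ s, P i ∧ y = f i}.Nonempty := ⟨f i, i, hi, hPi, rfl⟩
    obtain ⟨j, hj, hPj, hj_eq⟩ := hne.csInf_mem hfin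
    exact ⟨j, hj, hPj, hj_eq ▸ h⟩
  · rintro ⟨i, hi, hPi, h⟩
    exact ⟨⟨i, hi, hPi⟩, (csInf_le hfin.bddBelow ⟨i, hi, hPi, rfl⟩).trans h⟩

lemma sqrt_sq_add_sq_le_iff {x y r : ℝ} (hy : 0 ≤ y) :
    √(x ^ 2 + y ^ 2) ≤ r ↔ |x| ≤ r ∧ y ≤ √(r ^ 2 - x ^ 2) := by
  rw [sqrt_le_iff]
  constructor
  · rintro ⟨hr, h⟩
    have hx : |x| ≤ r := abs_le_of_sq_le_sq (by nlinarith) hr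
    exact ⟨hx, (le_sqrt hy (by linarith [sq_nonneg y])).2 (by linarith)⟩
  · rintro ⟨hx, h⟩
    have hx2 : x ^ 2 ≤ r ^ 2 := sq_le_sq' (abs_le.1 hx).1 (abs_le.1 hx).2
    have hy2 : y ^ 2 ≤ r ^ 2 - x ^ 2 := (le_sqrt hy (by linarith)).1 h
    exact ⟨(abs_nonneg x).trans hx, by linarith⟩

lemma EuclideanSpace.dist_fin_two (p q : EuclideanSpace ℝ (Fin 2)) :
    dist p q = √((p 0 - q 0) ^ 2 + (p 1 - q 1) ^ 2) := by
  simp only [EuclideanSpace.dist_eq, Fin.sum_univ_two, Real.dist_eq, sq_abs]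

lemma dist_le_iff_le_lowerHalfCircle {p q : EuclideanSpace ℝ (Fin 2)} (r : ℝ) (hpq : p 1 ≤ q 1) :
    dist p q ≤ r ↔ |p 0 - q 0| ≤ r ∧ q 1 - √(r ^ 2 - (p 0 - q 0) ^ 2) ≤ p 1 := by
  rw [EuclideanSpace.dist_fin_two, ← neg_sub (q 1), neg_sq, sqrt_sq_add_sq_le_iff (sub_nonneg.2 hpq),
    sub_le_comm]

theorem stmt15_general (lam b : ℝ)
    (Q : Finset (EuclideanSpace ℝ (Fin 2)))
    (habove : ∀ q ∈ Q, b < q 1)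
    (p : EuclideanSpace ℝ (Fin 2)) (hp : p 1 ≤ b) :
    (∃ q ∈ Q, dist p q ≤ lam) ↔
      ((∃ q ∈ Q, |p 0 - q 0| ≤ lam) ∧
        sInf {y : ℝ | ∃ q ∈ Q, |p 0 - q 0| ≤ lam ∧
          y = q 1 - Real.sqrt (lam ^ 2 - (p 0 - q 0) ^ 2)} ≤ p 1) := by
  rw [exists_and_csInf_le_iff Q (fun q => |p 0 - q 0| ≤ lam)
    (fun q => q 1 - √(lam ^ 2 - (p 0 - q 0) ^ 2))]
  exact exists_congr fun q => and_congr_right fun hq =>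
    dist_le_iff_le_lowerHalfCircle lam (hp.trans (habove q hq).le)

theorem stmt15 (lam b : ℝ) (hlam : 0 < lam)
    (Q : Finset (EuclideanSpace ℝ (Fin 2))) (hQ : Q.Nonempty)
    (habove : ∀ q ∈ Q, b < q 1)
    (p : EuclideanSpace ℝ (Fin 2)) (hp : p 1 ≤ b) :
    (∃ q ∈ Q, dist p q ≤ lam) ↔
      ((∃ q ∈ Q, |p 0 - q 0| ≤ lam) ∧
        sInf {y : ℝ | ∃ q ∈ Q, |p 0 - q 0| ≤ lam ∧
          y = q 1 - Real.sqrt (lam ^ 2 - (p 0 - q 0) ^ 2)} ≤ p 1) :=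
  stmt15_general lam b Q habove p hp
end

section
/- Let f, g : ℝ → ℝ be defined by f(x) = c₁ - √(λ² - (x - a₁)²) on [a₁ - λ, a₁ + λ] and g(x) = c₂ - √(λ² - (x - a₂)²) on [a₂ - λ, a₂ + λ], with (a₁, c₁) ≠ (a₂, c₂). Then the equation f(x) = g(x) has at most two solutions in the common domain, and if c₁, c₂ > b and we restrict to x with f(x) ≤ b, it has at most one solution. -/
/-!
A solution `x` gives the point `x + i f(x)` of `ℂ`, which lies on both circles of radius `λ`
about `a₁ + i c₁` and `a₂ + i c₂`; two distinct circles meet in at most two points. The point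
reflection through the midpoint of the centres swaps two circles of equal radius, so it permutes
their intersection points, and two distinct intersection points are exchanged by it. Their
heights then average to `(c₁ + c₂) / 2 > b`, so they cannot both lie at height `≤ b`.
-/

open Module

theorem Set.ncard_le_two_of_forall_eq_or_eq {α : Type*} {s : Set α}
    (h : ∀ x ∈ s, ∀ y ∈ s, x ≠ y → ∀ z ∈ s, z = x ∨ z = y) : s.ncard ≤ 2 := by
  by_cases hs : s.Nontrivial
  · obtain ⟨x, hx, y, hy, hxy⟩ := hs
    calc s.ncard ≤ ({x, y} : Set α).ncard := Set.ncard_le_ncard (fun z hz => h x hx y hy hxy z hz)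
      _ = 2 := Set.ncard_pair hxy
  · have hs := Set.not_nontrivial_iff.1 hs
    have := hs.finite.to_subtype
    exact (Set.ncard_le_one_iff_subsingleton.2 hs).trans one_le_two

namespace EuclideanGeometry

variable {V P : Type*} [NormedAddCommGroup V] [InnerProductSpace ℝ V] [MetricSpace P]
  [NormedAddTorsor V P] [FiniteDimensional ℝ V]

theorem pointReflection_midpoint_eq_of_dist_eq (hd : finrank ℝ V = 2) {c₁ c₂ p₁ p₂ : P} {r : ℝ}
    (hc : c₁ ≠ c₂) (hp : p₁ ≠ p₂) (hp₁c₁ : dist p₁ c₁ = r) (hp₂c₁ : dist p₂ c₁ = r)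
    (hp₁c₂ : dist p₁ c₂ = r) (hp₂c₂ : dist p₂ c₂ = r) :
    AffineIsometryEquiv.pointReflection ℝ (midpoint ℝ c₁ c₂) p₁ = p₂ := by
  set σ := AffineIsometryEquiv.pointReflection ℝ (midpoint ℝ c₁ c₂)
  have hσc₁ : ∀ p, dist (σ p) c₁ = dist p c₂ := fun p => by
    rw [← σ.dist_map p c₂, AffineIsometryEquiv.pointReflection_midpoint_right]
  have hσc₂ : ∀ p, dist (σ p) c₂ = dist p c₁ := fun p => by
    rw [← σ.dist_map p c₁, AffineIsometryEquiv.pointReflection_midpoint_left]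
  have hσ : ∀ p, dist p c₁ = r → dist p c₂ = r → σ p = p₁ ∨ σ p = p₂ := fun p h₁ h₂ =>
    eq_of_dist_eq_of_dist_eq_of_finrank_eq_two hd hc hp hp₁c₁ hp₂c₁ ((hσc₁ p).trans h₂)
      hp₁c₂ hp₂c₂ ((hσc₂ p).trans h₁)
  rcases hσ p₁ hp₁c₁ hp₁c₂ with hfix₁ | h
  · rcases hσ p₂ hp₂c₁ hp₂c₂ with h | hfix₂
    · exact absurd (σ.injective (h.trans hfix₁.symm)) hp.symm
    · rw [AffineIsometryEquiv.pointReflection_fixed_iff] at hfix₁ hfix₂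
      exact absurd (hfix₁.trans hfix₂.symm) hp
  · exact h

end EuclideanGeometry

theorem Complex.add_eq_add_of_dist_eq {c₁ c₂ p₁ p₂ : ℂ} {r : ℝ}
    (hc : c₁ ≠ c₂) (hp : p₁ ≠ p₂) (hp₁c₁ : dist p₁ c₁ = r) (hp₂c₁ : dist p₂ c₁ = r)
    (hp₁c₂ : dist p₁ c₂ = r) (hp₂c₂ : dist p₂ c₂ = r) : p₁ + p₂ = c₁ + c₂ := by
  rw [← EuclideanGeometry.pointReflection_midpoint_eq_of_dist_eq Complex.finrank_real_complex hc hp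
    hp₁c₁ hp₂c₁ hp₁c₂ hp₂c₂, AffineIsometryEquiv.pointReflection_apply, midpoint_eq_smul_add,
    vsub_eq_sub, vadd_eq_add, invOf_eq_inv]
  module

theorem Complex.dist_mk_sub_sqrt {a c r x : ℝ} (hx : x ∈ Set.Icc (a - r) (a + r)) :
    dist (⟨x, c - √(r ^ 2 - (x - a) ^ 2)⟩ : ℂ) ⟨a, c⟩ = |r| := by
  have : 0 ≤ r ^ 2 - (x - a) ^ 2 := by nlinarith [hx.1, hx.2]
  rw [Complex.dist_eq_re_im, sub_sub_cancel_left, neg_sq, Real.sq_sqrt this, add_sub_cancel,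
    Real.sqrt_sq_eq_abs]

theorem stmt16_general (lam b a₁ c₁ a₂ c₂ : ℝ)
    (hne : (a₁, c₁) ≠ (a₂, c₂)) (h1 : b < c₁) (h2 : b < c₂) :
    Set.ncard {x : ℝ | x ∈ Set.Icc (a₁ - lam) (a₁ + lam) ∧ x ∈ Set.Icc (a₂ - lam) (a₂ + lam) ∧
      c₁ - Real.sqrt (lam ^ 2 - (x - a₁) ^ 2) = c₂ - Real.sqrt (lam ^ 2 - (x - a₂) ^ 2)} ≤ 2 ∧
    Set.Subsingleton {x : ℝ | x ∈ Set.Icc (a₁ - lam) (a₁ + lam) ∧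
      x ∈ Set.Icc (a₂ - lam) (a₂ + lam) ∧
      c₁ - Real.sqrt (lam ^ 2 - (x - a₁) ^ 2) = c₂ - Real.sqrt (lam ^ 2 - (x - a₂) ^ 2) ∧
      c₁ - Real.sqrt (lam ^ 2 - (x - a₁) ^ 2) ≤ b} := by
  set p : ℝ → ℂ := fun x => ⟨x, c₁ - √(lam ^ 2 - (x - a₁) ^ 2)⟩ with hp
  have hp_inj : p.Injective := fun x y h => congrArg Complex.re h
  have hc : (⟨a₁, c₁⟩ : ℂ) ≠ ⟨a₂, c₂⟩ := by simpa [Complex.ext_iff] using hne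
  have hon : ∀ x ∈ Set.Icc (a₁ - lam) (a₁ + lam), x ∈ Set.Icc (a₂ - lam) (a₂ + lam) →
      c₁ - √(lam ^ 2 - (x - a₁) ^ 2) = c₂ - √(lam ^ 2 - (x - a₂) ^ 2) →
      dist (p x) ⟨a₁, c₁⟩ = |lam| ∧ dist (p x) ⟨a₂, c₂⟩ = |lam| := fun x hx₁ hx₂ hfg =>
    ⟨Complex.dist_mk_sub_sqrt hx₁, by simpa only [hp, hfg] using Complex.dist_mk_sub_sqrt hx₂⟩
  refine ⟨Set.ncard_le_two_of_forall_eq_or_eq ?_, ?_⟩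
  · rintro x ⟨hx₁, hx₂, hx⟩ y ⟨hy₁, hy₂, hy⟩ hxy z ⟨hz₁, hz₂, hz⟩
    obtain ⟨hx₁, hx₂⟩ := hon x hx₁ hx₂ hx
    obtain ⟨hy₁, hy₂⟩ := hon y hy₁ hy₂ hy
    obtain ⟨hz₁, hz₂⟩ := hon z hz₁ hz₂ hz
    exact (EuclideanGeometry.eq_of_dist_eq_of_dist_eq_of_finrank_eq_two
      Complex.finrank_real_complex hc (hp_inj.ne hxy) hx₁ hy₁ hz₁ hx₂ hy₂ hz₂).imp
      (congrArg Complex.re) (congrArg Complex.re)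
  · rintro x ⟨hx₁, hx₂, hx, hxb⟩ y ⟨hy₁, hy₂, hy, hyb⟩
    by_contra hxy
    obtain ⟨hx₁, hx₂⟩ := hon x hx₁ hx₂ hx
    obtain ⟨hy₁, hy₂⟩ := hon y hy₁ hy₂ hy
    have := congrArg Complex.im
      (Complex.add_eq_add_of_dist_eq hc (hp_inj.ne hxy) hx₁ hy₁ hx₂ hy₂)
    simp only [Complex.add_im, hp] at this
    linarith

theorem stmt16 (lam b a₁ c₁ a₂ c₂ : ℝ) (hlam : 0 < lam)
    (hne : (a₁, c₁) ≠ (a₂, c₂)) (h1 : b < c₁) (h2 : b < c₂) :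
    Set.ncard {x : ℝ | x ∈ Set.Icc (a₁ - lam) (a₁ + lam) ∧ x ∈ Set.Icc (a₂ - lam) (a₂ + lam) ∧
      c₁ - Real.sqrt (lam ^ 2 - (x - a₁) ^ 2) = c₂ - Real.sqrt (lam ^ 2 - (x - a₂) ^ 2)} ≤ 2 ∧
    Set.Subsingleton {x : ℝ | x ∈ Set.Icc (a₁ - lam) (a₁ + lam) ∧
      x ∈ Set.Icc (a₂ - lam) (a₂ + lam) ∧
      c₁ - Real.sqrt (lam ^ 2 - (x - a₁) ^ 2) = c₂ - Real.sqrt (lam ^ 2 - (x - a₂) ^ 2) ∧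
      c₁ - Real.sqrt (lam ^ 2 - (x - a₁) ^ 2) ≤ b} :=
  stmt16_general lam b a₁ c₁ a₂ c₂ hne h1 h2
end

section
/- Let S₀ and S₁ be finite nonempty sets of positive reals, and suppose a monotone predicate D on ℝ (i.e., D(λ) and λ ≤ λ' implies D(λ')) satisfies: the minimum value λ* with D(λ*) lies in S₀ ∪ S₁. Suppose we have intervals (a₀, b₀] and (a₁, b₁] with λ* ∈ (aᵢ, bᵢ], aᵢ, bᵢ ∈ Sᵢ ∪ {0}, and (aᵢ, bᵢ) ∩ Sᵢ = ∅ for i = 0, 1. Then λ* = min(b₀, b₁). -/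
theorem eq_of_mem_Ioc_of_Ioo_inter_eq_empty {α : Type*} [PartialOrder α] {S : Set α} {a b x : α}
    (hx : x ∈ Set.Ioc a b) (hxS : x ∈ S) (hS : Set.Ioo a b ∩ S = ∅) : x = b := by
  by_contra hne
  exact hS.subset ⟨⟨hx.1, hx.2.lt_of_ne hne⟩, hxS⟩

theorem stmt19_general (S₀ S₁ : Set ℝ)
    (D : ℝ → Prop)
    (lamstar : ℝ) (hleast : IsLeast {x ∈ S₀ ∪ S₁ | D x} lamstar)
    (a₀ b₀ a₁ b₁ : ℝ)
    (h₀ : lamstar ∈ Set.Ioc a₀ b₀) (h₁ : lamstar ∈ Set.Ioc a₁ b₁)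
    (he₀ : Set.Ioo a₀ b₀ ∩ S₀ = ∅) (he₁ : Set.Ioo a₁ b₁ ∩ S₁ = ∅) :
    lamstar = min b₀ b₁ := by
  rcases hleast.1.1 with hmem | hmem
  · obtain rfl := eq_of_mem_Ioc_of_Ioo_inter_eq_empty h₀ hmem he₀
    exact (min_eq_left h₁.2).symm
  · obtain rfl := eq_of_mem_Ioc_of_Ioo_inter_eq_empty h₁ hmem he₁
    exact (min_eq_right h₀.2).symm

theorem stmt19 (S₀ S₁ : Set ℝ) (hS₀f : S₀.Finite) (hS₁f : S₁.Finite)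
    (hS₀n : S₀.Nonempty) (hS₁n : S₁.Nonempty)
    (hpos₀ : ∀ x ∈ S₀, 0 < x) (hpos₁ : ∀ x ∈ S₁, 0 < x)
    (D : ℝ → Prop) (hmono : ∀ x y : ℝ, D x → x ≤ y → D y)
    (lamstar : ℝ) (hleast : IsLeast {x ∈ S₀ ∪ S₁ | D x} lamstar)
    (a₀ b₀ a₁ b₁ : ℝ)
    (h₀ : lamstar ∈ Set.Ioc a₀ b₀) (h₁ : lamstar ∈ Set.Ioc a₁ b₁)
    (ha₀ : a₀ ∈ S₀ ∪ {0}) (hb₀ : b₀ ∈ S₀ ∪ {0})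
    (ha₁ : a₁ ∈ S₁ ∪ {0}) (hb₁ : b₁ ∈ S₁ ∪ {0})
    (he₀ : Set.Ioo a₀ b₀ ∩ S₀ = ∅) (he₁ : Set.Ioo a₁ b₁ ∩ S₁ = ∅) :
    lamstar = min b₀ b₁ :=
  stmt19_general S₀ S₁ D lamstar hleast a₀ b₀ a₁ b₁ h₀ h₁ he₀ he₁
end
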